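/- arXiv:1302.2820 — 3 statements merged into one kernel-verified Lean document; each statement's English description precedes it below -/
import Mathlib

section
/- Let GEO be the geometric mixture over strictly positive distributions p_1, …, p_m on a finite alphabet X, and let pmax := max_{i,x} p_i(x), pmin := min_{i,x} p_i(x). Then for every w ∈ ℝ^m and x ∈ X, the gradient of ℓ(w) = -log GEO(x; w) satisfies |∇ℓ(w)|² ≤ (1 - GEO(x; w))·m·log²(pmax/pmin). -/
/-
With `l y = (log pᵢ(y))ᵢ`, the mixture `GEO(·; w)` is the softmax of `⟪l y, w⟫`, so
`-log₂ GEO(x; w)` is a log-sum-exp minus a linear function, with gradient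
`(log 2)⁻¹ • ∑ y, GEO(y; w) • (l y - l x)`. Each coordinate is an average, with total weight
`1 - GEO(x; w)` on the `y ≠ x`, of differences bounded by `log₂ (pmax / pmin)`; summing the squares
of the `m` coordinates and using `(1 - GEO)² ≤ 1 - GEO` gives the bound.
-/

noncomputable def geoMix {m N : ℕ} (p : Fin m → Fin N → ℝ) (w : Fin m → ℝ) (x : Fin N) : ℝ :=
  (∏ i, p i x ^ w i) / ∑ y, ∏ i, p i y ^ w i

open Real InnerProductSpace

section softmax

variable {α E : Type*} [Fintype α] [NormedAddCommGroup E] [InnerProductSpace ℝ E]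

noncomputable def softmax (a : α → E) (v : E) (y : α) : ℝ :=
  exp ⟪a y, v⟫_ℝ / ∑ z, exp ⟪a z, v⟫_ℝ

lemma sum_exp_inner_pos [Nonempty α] (a : α → E) (v : E) : 0 < ∑ z, exp ⟪a z, v⟫_ℝ :=
  Finset.sum_pos (fun _ _ => exp_pos _) Finset.univ_nonempty

lemma softmax_pos [Nonempty α] (a : α → E) (v : E) (y : α) : 0 < softmax a v y :=
  div_pos (exp_pos _) (sum_exp_inner_pos a v)

lemma sum_softmax [Nonempty α] (a : α → E) (v : E) : ∑ y, softmax a v y = 1 := by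
  simp only [softmax, ← Finset.sum_div]
  exact div_self (sum_exp_inner_pos a v).ne'

lemma softmax_le_one [Nonempty α] (a : α → E) (v : E) (y : α) : softmax a v y ≤ 1 :=
  sum_softmax a v ▸ Finset.single_le_sum (fun z _ => (softmax_pos a v z).le) (Finset.mem_univ y)

lemma hasGradientAt_log_sum_exp_inner_sub [CompleteSpace E] (a : α → E) (x : α) (w : E) :
    HasGradientAt (fun v => log (∑ y, exp ⟪a y, v⟫_ℝ) - ⟪a x, v⟫_ℝ)
      (∑ y, softmax a w y • (a y - a x)) w := by
  have : Nonempty α := ⟨x⟩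
  have hinner : ∀ b : E, HasFDerivAt (fun v => ⟪b, v⟫_ℝ) (toDual ℝ E b) w :=
    fun b => (toDual ℝ E b).hasFDerivAt
  have hsum := HasFDerivAt.fun_sum fun y (_ : y ∈ Finset.univ) => (hinner (a y)).exp
  have h := (hsum.log (sum_exp_inner_pos a w).ne').sub (hinner (a x))
  refine h.congr_fderiv ?_
  ext v
  simp only [sub_apply, smul_apply, sum_apply, toDual_apply_apply, map_sum, smul_eq_mul,
    inner_smul_left, inner_sub_left, RCLike.conj_to_real, mul_sub, Finset.sum_sub_distrib,
    ← Finset.sum_mul, sum_softmax, one_mul, Finset.mul_sum]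
  simp only [softmax, div_eq_inv_mul, mul_assoc]

end softmax

lemma abs_sum_mul_sub_le {α : Type*} [Fintype α] {q a : α → ℝ} {lo hi : ℝ} (hq : ∀ y, 0 ≤ q y)
    (hq1 : ∑ y, q y = 1) (ha : ∀ y, a y ∈ Set.Icc lo hi) (x : α) :
    |∑ y, q y * (a y - a x)| ≤ (1 - q x) * (hi - lo) := by
  classical
  have hrest : ∑ y ∈ Finset.univ.erase x, q y = 1 - q x := by
    rw [← hq1, ← Finset.add_sum_erase _ _ (Finset.mem_univ x), add_sub_cancel_left]
  rw [← Finset.add_sum_erase _ _ (Finset.mem_univ x), sub_self, mul_zero, zero_add, ← hrest,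
    Finset.sum_mul]
  refine (Finset.abs_sum_le_sum_abs _ _).trans (Finset.sum_le_sum fun y _ => ?_)
  rw [abs_mul, abs_of_nonneg (hq y)]
  refine mul_le_mul_of_nonneg_left (abs_sub_le_iff.2 ⟨?_, ?_⟩) (hq y) <;>
    linarith [(ha x).1, (ha x).2, (ha y).1, (ha y).2]

lemma EuclideanSpace.real_norm_sq_le_of_forall_abs_le {ι : Type*} [Fintype ι]
    {v : EuclideanSpace ℝ ι} {c : ℝ} (h : ∀ i, |v i| ≤ c) : ‖v‖ ^ 2 ≤ Fintype.card ι * c ^ 2 := by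
  rw [EuclideanSpace.real_norm_sq_eq, ← nsmul_eq_mul, ← Finset.card_univ, ← Finset.sum_const]
  exact Finset.sum_le_sum fun i _ => sq_le_sq' (abs_le.1 (h i)).1 (abs_le.1 (h i)).2

section geoMix

variable {m N : ℕ} {p : Fin m → Fin N → ℝ}

noncomputable def logProbs (p : Fin m → Fin N → ℝ) (y : Fin N) : EuclideanSpace ℝ (Fin m) :=
  WithLp.toLp 2 fun i => log (p i y)

lemma prod_rpow_eq_exp_inner_logProbs {y : Fin N} (hpos : ∀ i, 0 < p i y)
    (v : EuclideanSpace ℝ (Fin m)) : ∏ i, p i y ^ v i = exp ⟪logProbs p y, v⟫_ℝ := by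
  simp only [PiLp.inner_apply, logProbs, exp_sum, RCLike.inner_apply, conj_trivial]
  exact Finset.prod_congr rfl fun i _ => by rw [rpow_def_of_pos (hpos i), mul_comm]

lemma geoMix_eq_softmax (hpos : ∀ i y, 0 < p i y) (v : EuclideanSpace ℝ (Fin m)) (y : Fin N) :
    geoMix p v y = softmax (logProbs p) v y := by
  simp only [geoMix, softmax, prod_rpow_eq_exp_inner_logProbs (hpos · _)]

lemma neg_logb_geoMix_eq (hpos : ∀ i y, 0 < p i y) (v : EuclideanSpace ℝ (Fin m)) (x : Fin N) :
    -logb 2 (geoMix p v x) =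
      (log 2)⁻¹ * (log (∑ y, exp ⟪logProbs p y, v⟫_ℝ) - ⟪logProbs p x, v⟫_ℝ) := by
  have : Nonempty (Fin N) := ⟨x⟩
  rw [geoMix_eq_softmax hpos, softmax, logb, log_div (exp_pos _).ne' (sum_exp_inner_pos _ _).ne',
    log_exp]
  ring

lemma hasGradientAt_neg_logb_geoMix (hpos : ∀ i y, 0 < p i y) (x : Fin N)
    (w : EuclideanSpace ℝ (Fin m)) :
    HasGradientAt (fun v : EuclideanSpace ℝ (Fin m) => -logb 2 (geoMix p v x))
      ((log 2)⁻¹ • ∑ y, geoMix p w y • (logProbs p y - logProbs p x)) w := by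
  rw [funext (neg_logb_geoMix_eq hpos · x), hasGradientAt_iff_hasFDerivAt]
  simp only [geoMix_eq_softmax hpos]
  rw [map_smul]
  exact (hasGradientAt_log_sum_exp_inner_sub (logProbs p) x w).hasFDerivAt.const_mul _

lemma abs_gradient_neg_logb_geoMix_apply_le (hpos : ∀ i y, 0 < p i y) {pmax pmin : ℝ}
    (hpmin : 0 < pmin) (hmax : ∀ i y, p i y ≤ pmax) (hmin : ∀ i y, pmin ≤ p i y)
    (w : EuclideanSpace ℝ (Fin m)) (x : Fin N) (i : Fin m) :
    |((log 2)⁻¹ • ∑ y, geoMix p w y • (logProbs p y - logProbs p x)) i| ≤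
      (1 - geoMix p w x) * logb 2 (pmax / pmin) := by
  have : Nonempty (Fin N) := ⟨x⟩
  have hpmax : 0 < pmax := hpmin.trans_le ((hmin i x).trans (hmax i x))
  have hcomp : ((log 2)⁻¹ • ∑ y, geoMix p w y • (logProbs p y - logProbs p x)) i =
      ∑ y, geoMix p w y * (logb 2 (p i y) - logb 2 (p i x)) := by
    simp only [logProbs, logb, PiLp.smul_apply, WithLp.ofLp_sum, Finset.sum_apply, PiLp.sub_apply,
      smul_eq_mul, Finset.mul_sum]
    exact Finset.sum_congr rfl fun y _ => by ring
  rw [hcomp]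
  simp only [geoMix_eq_softmax hpos, logb_div hpmax.ne' hpmin.ne']
  exact abs_sum_mul_sub_le (fun y => (softmax_pos _ w y).le) (sum_softmax _ w)
    (fun y => ⟨logb_le_logb_of_le one_lt_two hpmin (hmin i y),
      logb_le_logb_of_le one_lt_two (hpos i y) (hmax i y)⟩) x

end geoMix

theorem stmt_11_general (m N : ℕ)
    (p : Fin m → Fin N → ℝ)
    (hpos : ∀ i x, 0 < p i x)
    (pmax pmin : ℝ)
    (hmax : IsGreatest {r | ∃ i x, p i x = r} pmax)
    (hmin : IsLeast {r | ∃ i x, p i x = r} pmin)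
    (x : Fin N) (w G : EuclideanSpace ℝ (Fin m))
    (hG : HasGradientAt (fun v : EuclideanSpace ℝ (Fin m) => -Real.logb 2 (geoMix p v x)) G w) :
    ‖G‖ ^ 2 ≤ (1 - geoMix p w x) * m * (Real.logb 2 (pmax / pmin)) ^ 2 := by
  have : Nonempty (Fin N) := ⟨x⟩
  obtain ⟨i₀, y₀, hpmin⟩ := hmin.1
  obtain rfl := hG.unique (hasGradientAt_neg_logb_geoMix hpos x w)
  have hcomp := abs_gradient_neg_logb_geoMix_apply_le hpos (hpmin ▸ hpos i₀ y₀)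
    (fun i y => hmax.2 ⟨i, y, rfl⟩) (fun i y => hmin.2 ⟨i, y, rfl⟩) w x
  have hq : geoMix p w x ∈ Set.Icc 0 1 := by
    rw [geoMix_eq_softmax hpos]
    exact ⟨(softmax_pos _ w x).le, softmax_le_one _ w x⟩
  set q := geoMix p w x
  set L := logb 2 (pmax / pmin)
  calc _ ≤ m * ((1 - q) * L) ^ 2 := by
        simpa using EuclideanSpace.real_norm_sq_le_of_forall_abs_le hcomp
    _ = (1 - q) * ((1 - q) * m * L ^ 2) := by ring
    _ ≤ (1 - q) * m * L ^ 2 :=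
        mul_le_of_le_one_left (by have := sub_nonneg.2 hq.2; positivity) (by linarith [hq.1])

theorem stmt_11 (m N : ℕ) (hm : 0 < m) (hN : 2 ≤ N)
    (p : Fin m → Fin N → ℝ)
    (hpos : ∀ i x, 0 < p i x) (hsum : ∀ i, ∑ x, p i x = 1)
    (pmax pmin : ℝ)
    (hmax : IsGreatest {r | ∃ i x, p i x = r} pmax)
    (hmin : IsLeast {r | ∃ i x, p i x = r} pmin)
    (x : Fin N) (w G : EuclideanSpace ℝ (Fin m))
    (hG : HasGradientAt (fun v : EuclideanSpace ℝ (Fin m) => -Real.logb 2 (geoMix p v x)) G w) :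
    ‖G‖ ^ 2 ≤ (1 - geoMix p w x) * m * (Real.logb 2 (pmax / pmin)) ^ 2 :=
  stmt_11_general m N p hpos pmax pmin hmax hmin x w G hG
end

section
/- Let LIN(x; w) := wᵀp(x) for w in the unit simplex and strictly positive distributions p_1, …, p_m on a finite alphabet, with pmax and pmin as above. Then for all w in the simplex and all x: |∇_w(-log LIN(x; w))|² ≤ a·(-log LIN(x; w)), where a = m·log²(e)·pmax²/(pmin²·log(1/pmin)). -/
/-!
The gradient has squared norm `log²(e) · ∑ᵢ pᵢ(x)² / S²` with `S = LIN(x; w)`, which is at most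
`m · log²(e) · pmax² / S²`. As a convex combination of the `pᵢ(x)`, `S` lies in `[pmin, pmax]`, and
`pmax ≤ 1 - pmin` because every `pᵢ` puts mass at least `pmin` on some second letter. On
`[q, 1 - q]` the function `z ↦ z² log(1/z)` is minimal at `z = q`: writing `z = q t`, this reduces
to `log (1 + t) ≤ t² log (1 + 1/t)` for `t ≥ 1`, a comparison of two secant slopes of the concave
logarithm at `1`. Hence `S² · (-log S) ≥ pmin² log(1/pmin)`, which is the claim.
-/

open Real Finset

theorem le_one_sub_of_sum_eq_one {ι : Type*} [Fintype ι] [Nontrivial ι] {f : ι → ℝ} {c : ℝ}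
    (hf : ∀ i, 0 ≤ f i) (hsum : ∑ i, f i = 1) (hc : ∀ i, c ≤ f i) (i : ι) : f i ≤ 1 - c := by
  classical
  obtain ⟨j, hji⟩ := exists_ne i
  have hpair : f i + f j ≤ ∑ k, f k := by
    simpa [sum_pair hji.symm] using
      sum_le_sum_of_subset_of_nonneg (subset_univ {i, j}) fun k _ _ ↦ hf k
  linarith [hc j]

namespace Real

theorem log_one_add_le_sq_mul_log_one_add_inv {t : ℝ} (ht : 1 ≤ t) :
    log (1 + t) ≤ t ^ 2 * log (1 + t⁻¹) := by
  have ht0 : 0 < t := by linarith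
  have hslope := (strictConcaveOn_log_Ioi.concaveOn.neg).secant_mono (a := 1) (x := 1 + t⁻¹)
    (y := 1 + t) (by simp) (by simp only [Set.mem_Ioi]; positivity)
    (by simp only [Set.mem_Ioi]; positivity) (by simp [ht0.ne']) (by simp [ht0.ne'])
    (by simpa using (inv_le_one_of_one_le₀ ht).trans ht)
  simp only [Pi.neg_apply, log_one, neg_zero, sub_zero, add_sub_cancel_left, div_inv_eq_mul]
    at hslope
  rw [neg_div, neg_mul, neg_le_neg_iff, div_le_iff₀ ht0] at hslope
  linear_combination hslope

theorem sq_mul_log_inv_le_of_mem_Icc {q z : ℝ} (hq : 0 < q) (hz : z ∈ Set.Icc q (1 - q)) :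
    q ^ 2 * log q⁻¹ ≤ z ^ 2 * log z⁻¹ := by
  obtain ⟨t, rfl⟩ : ∃ t, z = q * t := ⟨z / q, by field_simp⟩
  obtain ⟨hqz, hz1⟩ := hz
  have ht : 1 ≤ t := le_of_mul_le_mul_left (by simpa using hqz) hq
  have hq_inv : 1 + t ≤ q⁻¹ := by
    rw [← one_div, le_div_iff₀ hq]
    linarith
  have hlog_qt : log (q * t)⁻¹ = log q⁻¹ - log t := by
    rw [mul_inv, log_mul (by positivity) (by positivity), log_inv t]
    ring
  have hlog_t : log t = log (1 + t) - log (1 + t⁻¹) := by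
    rw [← log_div (by positivity) (by positivity)]
    congr 1
    field_simp
    ring
  have h1 : (t ^ 2 - 1) * log (1 + t) ≤ (t ^ 2 - 1) * log q⁻¹ :=
    mul_le_mul_of_nonneg_left (log_le_log (by positivity) hq_inv) (by nlinarith)
  have h2 := log_one_add_le_sq_mul_log_one_add_inv ht
  have key : log q⁻¹ ≤ t ^ 2 * (log q⁻¹ - log t) := by
    rw [hlog_t]
    linarith
  rw [hlog_qt, mul_pow, mul_assoc]
  exact mul_le_mul_of_nonneg_left key (sq_nonneg q)

theorem sq_mul_logb_inv_le_of_mem_Icc {b q z : ℝ} (hb : 1 < b) (hq : 0 < q)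
    (hz : z ∈ Set.Icc q (1 - q)) : q ^ 2 * logb b q⁻¹ ≤ z ^ 2 * logb b z⁻¹ := by
  simpa only [logb, mul_div_assoc] using
    div_le_div_of_nonneg_right (sq_mul_log_inv_le_of_mem_Icc hq hz) (log_nonneg hb.le)

end Real

theorem stmt_13_general (m N : ℕ) (hN : 2 ≤ N)
    (p : Fin m → Fin N → ℝ)
    (hpos : ∀ i x, 0 < p i x) (hsum : ∀ i, ∑ x, p i x = 1)
    (pmax pmin : ℝ)
    (hmax : IsGreatest {r | ∃ i x, p i x = r} pmax)
    (hmin : IsLeast {r | ∃ i x, p i x = r} pmin)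
    (x : Fin N) (w : Fin m → ℝ)
    (hw : (∀ i, 0 ≤ w i) ∧ ∑ i, w i = 1)
    (a : ℝ)
    (ha : a = m * (Real.logb 2 (Real.exp 1)) ^ 2 * pmax ^ 2 /
            (pmin ^ 2 * Real.logb 2 (1 / pmin))) :
    ∑ i, (-(Real.logb 2 (Real.exp 1)) * p i x / ∑ j, w j * p j x) ^ 2 ≤
      a * (-Real.logb 2 (∑ j, w j * p j x)) := by
  obtain ⟨⟨i₀, x₀, rfl⟩, hmin⟩ := hmin
  obtain ⟨⟨i₁, x₁, rfl⟩, hmax⟩ := hmax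
  set L := logb 2 (exp 1)
  set S := ∑ j, w j * p j x
  have hL : 0 < L := logb_pos one_lt_two (one_lt_exp_iff.2 one_pos)
  have hS : S ∈ Set.Icc (p i₀ x₀) (p i₁ x₁) :=
    (convex_Icc _ _).sum_mem (fun j _ ↦ hw.1 j) hw.2 fun j _ ↦ ⟨hmin ⟨j, x, rfl⟩, hmax ⟨j, x, rfl⟩⟩
  have hS₀ : 0 < S := (hpos i₀ x₀).trans_le hS.1
  have : Nontrivial (Fin N) := Fin.nontrivial_iff_two_le.2 hN
  have hpmax : p i₁ x₁ ≤ 1 - p i₀ x₀ := le_one_sub_of_sum_eq_one (fun y ↦ (hpos i₁ y).le)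
    (hsum i₁) (fun y ↦ hmin ⟨i₁, y, rfl⟩) x₁
  have hlogb : 0 < logb 2 (1 / p i₀ x₀) :=
    logb_pos one_lt_two (one_lt_one_div (hpos i₀ x₀) (by linarith [hS.1, hS.2]))
  calc ∑ i, (-L * p i x / S) ^ 2 ≤ ∑ _i : Fin m, (L * p i₁ x₁ / S) ^ 2 := by
        simp only [neg_mul, neg_div, neg_sq]
        gcongr with i
        · exact div_nonneg (mul_nonneg hL.le (hpos i x).le) hS₀.le
        exact hmax ⟨i, x, rfl⟩
    _ = a * (p i₀ x₀ ^ 2 * logb 2 (1 / p i₀ x₀) / S ^ 2) := by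
        rw [ha, sum_const, card_univ, Fintype.card_fin, nsmul_eq_mul]
        field_simp [(hpos i₀ x₀).ne', hlogb.ne']
    _ ≤ a * (S ^ 2 * logb 2 S⁻¹ / S ^ 2) := by
        have ha₀ : 0 ≤ a := by rw [ha]; positivity
        rw [one_div]
        gcongr a * (?_ / _)
        exact sq_mul_logb_inv_le_of_mem_Icc one_lt_two (hpos i₀ x₀) ⟨hS.1, hS.2.trans hpmax⟩
    _ = a * -logb 2 S := by
        rw [mul_div_cancel_left₀ _ (by positivity), logb_inv]

theorem stmt_13 (m N : ℕ) (hm : 0 < m) (hN : 2 ≤ N)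
    (p : Fin m → Fin N → ℝ)
    (hpos : ∀ i x, 0 < p i x) (hsum : ∀ i, ∑ x, p i x = 1)
    (pmax pmin : ℝ)
    (hmax : IsGreatest {r | ∃ i x, p i x = r} pmax)
    (hmin : IsLeast {r | ∃ i x, p i x = r} pmin)
    (x : Fin N) (w : Fin m → ℝ)
    (hw : (∀ i, 0 ≤ w i) ∧ ∑ i, w i = 1)
    (a : ℝ)
    (ha : a = m * (Real.logb 2 (Real.exp 1)) ^ 2 * pmax ^ 2 /
            (pmin ^ 2 * Real.logb 2 (1 / pmin))) :
    ∑ i, (-(Real.logb 2 (Real.exp 1)) * p i x / ∑ j, w j * p j x) ^ 2 ≤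
      a * (-Real.logb 2 (∑ j, w j * p j x)) :=
  stmt_13_general m N hN p hpos hsum pmax pmin hmax hmin x w hw a ha
end

section
/- Let N > 2, 0 < q < 1, and let p_1, p_2 be distributions on X = {1,…,N} with p_1(1) = p_2(1) = q, p_1(2) = p_2(3) = (1-q)(1-ε), and p_1(x) = (1-q)ε/(N-2) on the remaining letters (similarly p_2). Then for w = (1/2, 1/2), GEO(1; w) = q / (q + (1-q)·f(ε,N)) with f(ε,N) = 2√(ε(1-ε)/(N-2)) + ((N-3)/(N-2))ε, and if 0 < ε < (N-2)/(N-1)² then f(ε,N) < 1 and hence GEO(1; w) > q = max_{v∈S} LIN(1; v). -/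
open Finset

theorem geoMix_half_eq_sqrt_div {N : ℕ} (p : Fin 2 → Fin N → ℝ) (hp : ∀ i x, 0 ≤ p i x)
    (x : Fin N) :
    geoMix p (fun _ => 1 / 2) x = √(p 0 x * p 1 x) / ∑ y, √(p 0 y * p 1 y) := by
  have h : ∀ y, ∏ i, p i y ^ (1 / 2 : ℝ) = √(p 0 y * p 1 y) := fun y => by
    rw [Fin.prod_univ_two, Real.sqrt_eq_rpow, Real.mul_rpow (hp 0 y) (hp 1 y)]
  simp only [geoMix, h]

theorem sum_range_three_add_of_eq_const {M : Type*} [AddCommMonoid M] {g : ℕ → M} {c : M}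
    (hg : ∀ k, 3 ≤ k → g k = c) (n : ℕ) :
    ∑ k ∈ range (3 + n), g k = g 0 + g 1 + g 2 + n • c := by
  rw [sum_range_add, sum_congr rfl fun k _ => hg (3 + k) (by omega)]
  simp [sum_range_succ]

theorem two_mul_sqrt_add_lt_one {n ε : ℝ} (hn : 3 ≤ n) (hε0 : 0 ≤ ε)
    (hε : ε < (n - 2) / (n - 1) ^ 2) :
    2 * √(ε * (1 - ε) / (n - 2)) + (n - 3) / (n - 2) * ε < 1 := by
  -- With `t = √(ε / (n - 2)) < 1 / (n - 1)`, the left side is at most `2t + (n - 3)t ≤ (n - 1)t`.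
  set t := √(ε / (n - 2))
  have hn2 : 0 < n - 2 := by linarith
  have ht0 : 0 ≤ t := Real.sqrt_nonneg _
  have ht2 : t ^ 2 = ε / (n - 2) := Real.sq_sqrt (by positivity)
  have htn : (n - 1) * t < 1 := by
    have : ((n - 1) * t) ^ 2 < 1 := by
      rw [mul_pow, ht2, mul_div_assoc', div_lt_one hn2]
      rwa [lt_div_iff₀ (by nlinarith), mul_comm] at hε
    nlinarith
  have ht1 : t ≤ 1 := by nlinarith
  have hsqrt : √(ε * (1 - ε) / (n - 2)) ≤ t :=
    Real.sqrt_le_sqrt (div_le_div_of_nonneg_right (by nlinarith) hn2.le)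
  have hlin : (n - 3) / (n - 2) * ε ≤ (n - 3) * t := by
    rw [div_mul_eq_mul_div, mul_div_assoc, ← ht2]
    exact mul_le_mul_of_nonneg_left (by nlinarith) (by linarith)
  nlinarith

theorem lt_div_add_mul_of_lt_one {q f : ℝ} (hq0 : 0 < q) (hq1 : q < 1) (hf0 : 0 ≤ f)
    (hf1 : f < 1) : q < q / (q + (1 - q) * f) := by
  have hd : 0 < q + (1 - q) * f := by nlinarith
  rw [lt_div_iff₀ hd]
  nlinarith [mul_pos hq0 (mul_pos (sub_pos.2 hq1) (sub_pos.2 hf1))]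

namespace AgreeingExperts

variable {N : ℕ} {q ε : ℝ} {p : Fin 2 → Fin N → ℝ}

theorem sqrt_mul_eq_ite (hN : 2 < N) (hq0 : 0 ≤ q) (hq1 : q ≤ 1) (hε0 : 0 ≤ ε)
    (hp1 : ∀ x : Fin N, p 0 x =
      if (x : ℕ) = 0 then q else if (x : ℕ) = 1 then (1 - q) * (1 - ε)
      else (1 - q) * ε / (N - 2))
    (hp2 : ∀ x : Fin N, p 1 x =
      if (x : ℕ) = 0 then q else if (x : ℕ) = 2 then (1 - q) * (1 - ε)
      else (1 - q) * ε / (N - 2)) (y : Fin N) :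
    √(p 0 y * p 1 y) =
      if (y : ℕ) = 0 then q
      else if (y : ℕ) = 1 ∨ (y : ℕ) = 2 then (1 - q) * √(ε * (1 - ε) / (N - 2))
      else (1 - q) * ε / (N - 2) := by
  have hN2 : (0 : ℝ) < N - 2 := by
    have : (3 : ℝ) ≤ N := by exact_mod_cast hN
    linarith
  have hc : 0 ≤ (1 - q) * ε / (N - 2) := by have := sub_nonneg.2 hq1; positivity
  have hac : (1 - q) * (1 - ε) * ((1 - q) * ε / (N - 2)) =
      (1 - q) ^ 2 * (ε * (1 - ε) / (N - 2)) := by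
    ring
  rw [hp1, hp2]
  split_ifs <;> first
    | omega
    | exact Real.sqrt_mul_self ‹_›
    | rw [hac, Real.sqrt_mul (sq_nonneg _), Real.sqrt_sq (by linarith)]
    | rw [mul_comm, hac, Real.sqrt_mul (sq_nonneg _), Real.sqrt_sq (by linarith)]

theorem sum_sqrt_mul_eq (hN : 2 < N) (hq0 : 0 ≤ q) (hq1 : q ≤ 1) (hε0 : 0 ≤ ε)
    (hp1 : ∀ x : Fin N, p 0 x =
      if (x : ℕ) = 0 then q else if (x : ℕ) = 1 then (1 - q) * (1 - ε)
      else (1 - q) * ε / (N - 2))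
    (hp2 : ∀ x : Fin N, p 1 x =
      if (x : ℕ) = 0 then q else if (x : ℕ) = 2 then (1 - q) * (1 - ε)
      else (1 - q) * ε / (N - 2)) :
    ∑ y, √(p 0 y * p 1 y) =
      q + (1 - q) * (2 * √(ε * (1 - ε) / (N - 2)) + (N - 3) / (N - 2) * ε) := by
  set s := (1 - q) * √(ε * (1 - ε) / (N - 2))
  set c := (1 - q) * ε / (N - 2)
  let g : ℕ → ℝ := fun k => if k = 0 then q else if k = 1 ∨ k = 2 then s else c
  have hsum : ∑ y : Fin N, g y = q + 2 * s + (N - 3) * c := by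
    obtain ⟨n, rfl⟩ : ∃ n, N = 3 + n := ⟨N - 3, by omega⟩
    rw [Fin.sum_univ_eq_sum_range g, sum_range_three_add_of_eq_const (c := c) _ n,
      nsmul_eq_mul]
    · simp only [g, ↓reduceIte, one_ne_zero, OfNat.one_ne_ofNat, OfNat.ofNat_ne_zero,
        OfNat.ofNat_ne_one, or_false, or_true, Nat.cast_add, Nat.cast_ofNat]
      ring
    · exact fun k hk => by simp only [g]; rw [if_neg (by omega), if_neg (by omega)]
  have hN2 : (N : ℝ) - 2 ≠ 0 := by
    have : (3 : ℝ) ≤ N := by exact_mod_cast hN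
    linarith
  rw [sum_congr rfl fun y _ => sqrt_mul_eq_ite hN hq0 hq1 hε0 hp1 hp2 y]
  change ∑ y : Fin N, g y = _
  rw [hsum]
  simp only [s, c]
  field_simp
  ring

end AgreeingExperts

theorem stmt_18 (N : ℕ) (hN : 2 < N) (q ε : ℝ) (hq0 : 0 < q) (hq1 : q < 1)
    (hε0 : 0 < ε) (hε1 : ε < 1)
    (p : Fin 2 → Fin N → ℝ)
    (hp1 : ∀ x : Fin N, p 0 x =
      if (x : ℕ) = 0 then q else if (x : ℕ) = 1 then (1 - q) * (1 - ε)
      else (1 - q) * ε / (N - 2))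
    (hp2 : ∀ x : Fin N, p 1 x =
      if (x : ℕ) = 0 then q else if (x : ℕ) = 2 then (1 - q) * (1 - ε)
      else (1 - q) * ε / (N - 2))
    (w : Fin 2 → ℝ) (hw : w = fun _ => (1 : ℝ) / 2)
    (f : ℝ) (hf : f = 2 * Real.sqrt (ε * (1 - ε) / (N - 2)) + ((N - 3) / (N - 2)) * ε) :
    geoMix p w ⟨0, by omega⟩ = q / (q + (1 - q) * f) ∧
      (∀ v : Fin 2 → ℝ, (∀ i, 0 ≤ v i) → v 0 + v 1 = 1 →
        (∑ i, v i * p i ⟨0, by omega⟩) = q) ∧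
      (ε < (N - 2) / (N - 1) ^ 2 → f < 1 ∧ q < geoMix p w ⟨0, by omega⟩) := by
  have hN3 : (3 : ℝ) ≤ N := by exact_mod_cast hN
  have hp : ∀ i x, 0 ≤ p i x := by
    have : (0 : ℝ) < N - 2 := by linarith
    have : 0 ≤ 1 - q := by linarith
    have : 0 ≤ 1 - ε := by linarith
    refine Fin.forall_fin_two.2 ⟨fun x => ?_, fun x => ?_⟩ <;> [rw [hp1]; rw [hp2]] <;>
      split_ifs <;> positivity
  have hgeo : geoMix p w ⟨0, by omega⟩ = q / (q + (1 - q) * f) := by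
    rw [hw, geoMix_half_eq_sqrt_div p hp,
      AgreeingExperts.sqrt_mul_eq_ite hN hq0.le hq1.le hε0.le hp1 hp2,
      AgreeingExperts.sum_sqrt_mul_eq hN hq0.le hq1.le hε0.le hp1 hp2, hf, if_pos rfl]
  refine ⟨hgeo, fun v _ hv => ?_, fun hε => ?_⟩
  · simp only [Fin.sum_univ_two, hp1, hp2, ↓reduceIte]
    linear_combination q * hv
  · have hf1 : f < 1 := hf ▸ two_mul_sqrt_add_lt_one hN3 hε0.le hε
    have hf0 : 0 ≤ f := by
      rw [hf]
      have : (0 : ℝ) < N - 2 := by linarith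
      have : (0 : ℝ) ≤ N - 3 := by linarith
      positivity
    exact ⟨hf1, hgeo ▸ lt_div_add_mul_of_lt_one hq0 hq1 hf0 hf1⟩
end
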